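/- arXiv:1909.09630 — 2 statements merged into one kernel-verified Lean document; each statement's English description precedes it below -/
import Mathlib

section
/- Fix ε > 0, β ∈ (0,1), positive integers d ≤ n with d dividing n, an integer m' ≤ n/d, inputs x'_1,…,x'_{n/d} ∈ {+1,−1}, and a set C ⊆ [n/d] with |C| = m'. For each honest user i ∉ C, let y_i be an independent random variable equal to x'_i · (e^ε+1)/(e^ε−1) with probability e^ε/(e^ε+1) and −x'_i · (e^ε+1)/(e^ε−1) with probability 1/(e^ε+1); for each corrupted user i ∈ C, let y_i be an arbitrary value in {+(e^ε+1)/(e^ε−1), −(e^ε+1)/(e^ε−1)} (chosen adversarially, possibly depending on the honest messages). Then with probability at least 1 − β/d: | (d/n)·Σ_{i=1}^{n/d} y_i − (d/n)·Σ_{i=1}^{n/d} x'_i | < ((e^ε+1)/(e^ε−1)) · ( √((2d/n)·ln(2d/β)) + 2d·m'/n ). -/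
open scoped Classical

/-- The magnitude `(e^ε+1)/(e^ε-1)` of a randomized-response message. -/
noncomputable def rrA (ε : ℝ) : ℝ := (Real.exp ε + 1) / (Real.exp ε - 1)

/-- The probability of the randomized-response coin: `e^ε/(e^ε+1)` for the
truthful outcome and `1/(e^ε+1)` for the flipped outcome. -/
noncomputable def rrProb (ε : ℝ) (b : Bool) : ℝ :=
  if b then Real.exp ε / (Real.exp ε + 1) else 1 / (Real.exp ε + 1)

/-- The honest randomized-response message of user `i` with input `x'_i ∈ {±1}`
and coin `s i`: it equals `x'_i (e^ε+1)/(e^ε-1)` when the coin is truthful and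
`-x'_i (e^ε+1)/(e^ε-1)` otherwise. -/
noncomputable def rrMsg (ε : ℝ) {N : ℕ} (x' : Fin N → ℝ) (s : Fin N → Bool)
    (i : Fin N) : ℝ :=
  (if s i then x' i else -(x' i)) * rrA ε

/-!
The messages of the `N = n/d` users are driven by independent coins. An honest message lies in
`[-A, A]` with `A = (e^ε+1)/(e^ε-1)` and has mean `x'_i` (randomized response is unbiased), so by
Hoeffding's inequality the honest deviation `|∑_{i ∉ C} (y_i - x'_i)|` reaches
`A √(2N ln(2d/β))` with probability at most `2 exp(-ln(2d/β)) = β/d`. Each of the `m'`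
corrupted users moves the sum by at most `A + 1 ≤ 2A`, and scaling by `d/n = 1/N` gives the bound.
-/

open MeasureTheory ProbabilityTheory Real
open scoped NNReal

section Hoeffding

variable {ι : Type*} [Fintype ι] {Ω : ι → Type*} [∀ i, MeasurableSpace (Ω i)]
  {ν : ∀ i, Measure (Ω i)} [∀ i, IsProbabilityMeasure (ν i)]

theorem hasSubgaussianMGF_sum_sub_integral_pi {f : ∀ i, Ω i → ℝ} (hf : ∀ i, Measurable (f i))
    {K : ℝ≥0} (hK : ∀ i ω, |f i ω| ≤ K) :
    HasSubgaussianMGF (fun ω : ∀ i, Ω i ↦ ∑ i, (f i (ω i) - ∫ x, f i x ∂ν i))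
      (Fintype.card ι * K ^ 2) (Measure.pi ν) := by
  have hsub (i : ι) : HasSubgaussianMGF (fun ω : ∀ i, Ω i ↦ f i (ω i) - ∫ x, f i x ∂ν i)
      (K ^ 2) (Measure.pi ν) := by
    have hi := hasSubgaussianMGF_of_mem_Icc (hf i).aemeasurable
      (ae_of_all (ν i) fun ω ↦ abs_le.mp (hK i ω))
    have hK2 : (‖(K : ℝ) - -K‖₊ / 2) ^ 2 = K ^ 2 := by
      congr 1
      ext
      simp [← two_mul]
    have hmap := (measurePreserving_eval ν i).map_eq
    rw [hK2, ← hmap] at hi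
    simpa [hmap, Function.comp_def] using hi.of_map (measurable_pi_apply i).aemeasurable
  simpa using HasSubgaussianMGF.sum_of_iIndepFun
    (iIndepFun_pi (μ := ν) fun i ↦ ((hf i).sub_const (∫ x, f i x ∂ν i)).aemeasurable)
    (s := Finset.univ) fun i _ ↦ hsub i

theorem measureReal_pi_abs_sum_sub_integral_ge_le {f : ∀ i, Ω i → ℝ} (hf : ∀ i, Measurable (f i))
    {K : ℝ≥0} (hK : ∀ i ω, |f i ω| ≤ K) {t : ℝ} (ht : 0 ≤ t) :
    (Measure.pi ν).real {ω | t ≤ |∑ i, (f i (ω i) - ∫ x, f i x ∂ν i)|} ≤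
      2 * exp (-t ^ 2 / (2 * (Fintype.card ι * K ^ 2))) := by
  have h := hasSubgaussianMGF_sum_sub_integral_pi (ν := ν) hf hK
  have hsplit : {ω | t ≤ |∑ i, (f i (ω i) - ∫ x, f i x ∂ν i)|} ⊆
      {ω | t ≤ ∑ i, (f i (ω i) - ∫ x, f i x ∂ν i)} ∪
        {ω | t ≤ (-fun ω : ∀ i, Ω i ↦ ∑ i, (f i (ω i) - ∫ x, f i x ∂ν i)) ω} := by
    intro ω (hω : t ≤ |_|)
    exact le_abs.mp hω
  calc _ ≤ _ := measureReal_mono hsplit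
    _ ≤ _ := measureReal_union_le _ _
    _ ≤ _ := by
      rw [two_mul]
      gcongr
      · simpa using h.measure_ge_le ht
      · simpa using h.neg.measure_ge_le ht

end Hoeffding

theorem PMF.measureReal_pi_setOf_eq_sum {ι α : Type*} [Fintype ι] [DecidableEq ι] [Fintype α]
    [MeasurableSpace α] [MeasurableSingletonClass α] (p : PMF α) (P : (ι → α) → Prop)
    [DecidablePred P] :
    (Measure.pi fun _ : ι ↦ p.toMeasure).real {s | P s} =
      ∑ s, if P s then ∏ i, (p (s i)).toReal else 0 := by
  rw [← Finset.coe_filter_univ, ← sum_measureReal_singleton, Finset.sum_filter]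
  refine Finset.sum_congr rfl fun s _ ↦ ?_
  simp [measureReal_def, ENNReal.toReal_prod, p.toMeasure_apply_singleton]

theorem abs_sum_sub_sum_lt_of_corrupted {ι : Type*} [Fintype ι] [DecidableEq ι]
    (C : Finset ι) {y x : ι → ℝ} {a r : ℝ} (hC : ∀ i ∈ C, |y i - x i| ≤ a)
    (hCc : |∑ i ∈ Cᶜ, (y i - x i)| < r) :
    |∑ i, y i - ∑ i, x i| < r + C.card * a := by
  have hCsum : |∑ i ∈ C, (y i - x i)| ≤ C.card * a :=
    (Finset.abs_sum_le_sum_abs _ _).trans (by simpa using Finset.sum_le_card_nsmul C _ a hC)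
  rw [← Finset.sum_sub_distrib, ← Finset.sum_compl_add_sum C]
  linarith [abs_add_le (∑ i ∈ Cᶜ, (y i - x i)) (∑ i ∈ C, (y i - x i))]

theorem rrProb_nonneg (ε : ℝ) (b : Bool) : 0 ≤ rrProb ε b := by
  cases b <;> simp only [rrProb, Bool.false_eq_true, if_true, if_false] <;> positivity

theorem rrProb_true_add_false (ε : ℝ) : rrProb ε true + rrProb ε false = 1 := by
  simp only [rrProb, if_true, Bool.false_eq_true, if_false]
  field_simp

theorem one_le_rrA {ε : ℝ} (hε : 0 < ε) : 1 ≤ rrA ε := by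
  have := Real.add_one_lt_exp hε.ne'
  rw [rrA, le_div_iff₀ (by linarith)]
  linarith

noncomputable def rrCoin (ε : ℝ) : PMF Bool :=
  PMF.ofFintype (fun b ↦ ENNReal.ofReal (rrProb ε b)) <| by
    rw [← ENNReal.ofReal_sum_of_nonneg fun b _ ↦ rrProb_nonneg ε b, Fintype.sum_bool,
      rrProb_true_add_false, ENNReal.ofReal_one]

theorem rrCoin_toReal (ε : ℝ) (b : Bool) : (rrCoin ε b).toReal = rrProb ε b :=
  ENNReal.toReal_ofReal (rrProb_nonneg ε b)

theorem integral_rrCoin (ε : ℝ) (f : Bool → ℝ) :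
    ∫ b, f b ∂(rrCoin ε).toMeasure = rrProb ε true * f true + rrProb ε false * f false := by
  simp [PMF.integral_eq_sum, rrCoin_toReal]

theorem integral_rrCoin_msg {ε : ℝ} (hε : ε ≠ 0) (u : ℝ) :
    ∫ b, (if b then u else -u) * rrA ε ∂(rrCoin ε).toMeasure = u := by
  have : Real.exp ε - 1 ≠ 0 := by
    rw [sub_ne_zero, Ne, Real.exp_eq_one_iff]
    exact hε
  rw [integral_rrCoin]
  simp only [rrProb, rrA, if_true, Bool.false_eq_true, if_false]
  field_simp
  ring

theorem measureReal_pi_rrCoin_setOf (ε : ℝ) {N : ℕ} (P : (Fin N → Bool) → Prop) :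
    (Measure.pi fun _ ↦ (rrCoin ε).toMeasure).real {s | P s} =
      ∑ s, if P s then ∏ i, rrProb ε (s i) else 0 := by
  simp [PMF.measureReal_pi_setOf_eq_sum, rrCoin_toReal]

theorem measureReal_rr_deviation_ge_le {ε : ℝ} (hε : 0 < ε) {N : ℕ} {x' : Fin N → ℝ}
    (hx' : ∀ i, |x' i| ≤ 1) (C : Finset (Fin N)) {t : ℝ} (ht : 0 ≤ t) :
    (Measure.pi fun _ ↦ (rrCoin ε).toMeasure).real
        {s | t ≤ |∑ i ∈ Cᶜ, (rrMsg ε x' s i - x' i)|} ≤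
      2 * exp (-t ^ 2 / (2 * (N * rrA ε ^ 2))) := by
  have hA : 0 ≤ rrA ε := zero_le_one.trans (one_le_rrA hε)
  let f (i : Fin N) (b : Bool) : ℝ := if i ∈ C then 0 else (if b then x' i else -x' i) * rrA ε
  have hf (i : Fin N) (b : Bool) : |f i b| ≤ (rrA ε).toNNReal := by
    have := hx' i
    simp only [f]
    split_ifs <;> simp [abs_mul, abs_of_nonneg hA, hA] <;> nlinarith
  have hsum (s : Fin N → Bool) :
      ∑ i, (f i (s i) - ∫ b, f i b ∂(rrCoin ε).toMeasure) =
        ∑ i ∈ Cᶜ, (rrMsg ε x' s i - x' i) := by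
    rw [← Finset.sum_compl_add_sum C, Finset.sum_eq_zero (s := C), add_zero]
    · refine Finset.sum_congr rfl fun i hi ↦ ?_
      simp only [f, if_neg (Finset.mem_compl.mp hi), rrMsg, integral_rrCoin_msg hε.ne']
    · intro i hi
      simp [f, hi]
  have := measureReal_pi_abs_sum_sub_integral_ge_le (ν := fun _ ↦ (rrCoin ε).toMeasure)
    (fun i ↦ measurable_of_countable (f i)) hf ht
  simpa [hsum, hA] using this

theorem measureReal_rr_deviation_ge_le_of_log {ε : ℝ} (hε : 0 < ε) {N : ℕ} (hN : 0 < N)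
    {x' : Fin N → ℝ} (hx' : ∀ i, |x' i| ≤ 1) (C : Finset (Fin N)) {δ : ℝ} (hδ : 0 < δ)
    (hδ2 : δ ≤ 2) :
    (Measure.pi fun _ ↦ (rrCoin ε).toMeasure).real
        {s | rrA ε * √(2 * N * log (2 / δ)) ≤ |∑ i ∈ Cᶜ, (rrMsg ε x' s i - x' i)|} ≤ δ := by
  have hL : 0 ≤ log (2 / δ) := log_nonneg <| by rwa [le_div_iff₀ hδ, one_mul]
  have hA : 0 < rrA ε := zero_lt_one.trans_le (one_le_rrA hε)
  refine (measureReal_rr_deviation_ge_le hε hx' C (by positivity)).trans_eq ?_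
  have hexp : -(rrA ε * √(2 * N * log (2 / δ))) ^ 2 / (2 * (N * rrA ε ^ 2)) = -log (2 / δ) := by
    rw [mul_pow, sq_sqrt (by positivity)]
    field_simp
  rw [hexp, exp_neg, exp_log (by positivity)]
  field_simp

theorem abs_sum_corrupted_rrMsg_sub_lt {ε : ℝ} (hε : 0 < ε) {N : ℕ} {x' : Fin N → ℝ}
    (hx' : ∀ i, |x' i| ≤ 1) {C : Finset (Fin N)} {y : Fin N → ℝ}
    (hy : ∀ i ∈ C, y i = rrA ε ∨ y i = -rrA ε) {s : Fin N → Bool} {r : ℝ}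
    (hs : |∑ i ∈ Cᶜ, (rrMsg ε x' s i - x' i)| < r) :
    |∑ i, (if i ∈ C then y i else rrMsg ε x' s i) - ∑ i, x' i| < r + C.card * (2 * rrA ε) := by
  have hA : 0 ≤ rrA ε := zero_le_one.trans (one_le_rrA hε)
  refine abs_sum_sub_sum_lt_of_corrupted C (fun i hi ↦ ?_) ?_
  · have hyi : |y i| = rrA ε := by rcases hy i hi with h | h <;> simp [h, abs_of_nonneg hA]
    simp only [if_pos hi]
    linarith [abs_sub (y i) (x' i), hx' i, one_le_rrA hε]
  · rwa [Finset.sum_congr rfl fun i hi ↦ by rw [if_neg (Finset.mem_compl.mp hi)]]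

theorem stmt_12_general (ε β : ℝ) (hε : 0 < ε) (hβ : β ∈ Set.Ioo (0 : ℝ) 1)
    (n d : ℕ) (hd : 0 < d) (hdn : d ≤ n) (hdvd : d ∣ n)
    (m' : ℕ)
    (x' : Fin (n / d) → ℝ) (hx' : ∀ i, x' i = 1 ∨ x' i = -1)
    (C : Finset (Fin (n / d))) (hC : C.card = m')
    (M : (Fin (n / d) → ℝ) → Fin (n / d) → ℝ)
    (hM : ∀ v i, i ∈ C → M v i = rrA ε ∨ M v i = -(rrA ε)) :
    1 - β / d ≤
      ∑ s : Fin (n / d) → Bool,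
        (if
            |((d : ℝ) / n) * (∑ i, (if i ∈ C then
                M (fun i' => if i' ∈ C then 0 else rrMsg ε x' s i') i
              else rrMsg ε x' s i)) -
              ((d : ℝ) / n) * ∑ i, x' i|
              < rrA ε * (Real.sqrt (2 * d / n * Real.log (2 * d / β)) + 2 * d * m' / n)
          then ∏ i, rrProb ε (s i)
          else 0) := by
  obtain ⟨hβ0, hβ1⟩ := hβ
  have hd' : (0 : ℝ) < d := by exact_mod_cast hd
  have hn : (0 : ℝ) < n := by exact_mod_cast hd.trans_le hdn
  have hx'1 (i : Fin (n / d)) : |x' i| ≤ 1 := by rcases hx' i with h | h <;> simp [h]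
  have hscale : (d : ℝ) / n * (rrA ε * √(2 * ((n / d : ℕ) : ℝ) * log (2 / (β / d))) +
      m' * (2 * rrA ε)) = rrA ε * (√(2 * d / n * log (2 * d / β)) + 2 * d * m' / n) := by
    have hsqrt : (d : ℝ) / n * √(2 * ((n / d : ℕ) : ℝ) * log (2 / (β / d))) =
        √(2 * d / n * log (2 * d / β)) := by
      rw [← sqrt_sq (by positivity : (0 : ℝ) ≤ d / n), ← sqrt_mul (by positivity),
        Nat.cast_div hdvd hd'.ne', div_div_eq_mul_div]
      congr 1
      field_simp
    linear_combination rrA ε * hsqrt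
  have htail := measureReal_rr_deviation_ge_le_of_log hε (Nat.div_pos hdn hd) hx'1 C
    (δ := β / d) (by positivity) <| by
      rw [div_le_iff₀ hd']
      linarith [show (1 : ℝ) ≤ d by exact_mod_cast hd]
  rw [← measureReal_pi_rrCoin_setOf ε]
  refine (sub_le_sub_left htail 1).trans ?_
  rw [← probReal_compl_eq_one_sub (Set.toFinite _).measurableSet]
  refine measureReal_mono fun s hs ↦ ?_
  have hdev := abs_sum_corrupted_rrMsg_sub_lt hε hx'1
    (hM fun i' ↦ if i' ∈ C then 0 else rrMsg ε x' s i') (not_le.mp hs)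
  rw [Set.mem_ofPred_eq, ← mul_sub, abs_mul, abs_of_pos (by positivity), ← hscale, ← hC]
  gcongr

/-- randomized response with `n/d` users, inputs in `{±1}`, a set
`C` of `m'` corrupted users whose messages are arbitrary values in
`{±(e^ε+1)/(e^ε-1)}` chosen adversarially as a function of the honest messages.
With probability at least `1 - β/d`,
`|(d/n) Σ y_i - (d/n) Σ x'_i| < ((e^ε+1)/(e^ε-1)) (√((2d/n) ln(2d/β)) + 2dm'/n)`. -/
theorem stmt_12 (ε β : ℝ) (hε : 0 < ε) (hβ : β ∈ Set.Ioo (0 : ℝ) 1)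
    (n d : ℕ) (hd : 0 < d) (hdn : d ≤ n) (hdvd : d ∣ n)
    (m' : ℕ) (hm' : m' ≤ n / d)
    (x' : Fin (n / d) → ℝ) (hx' : ∀ i, x' i = 1 ∨ x' i = -1)
    (C : Finset (Fin (n / d))) (hC : C.card = m')
    (M : (Fin (n / d) → ℝ) → Fin (n / d) → ℝ)
    (hM : ∀ v i, i ∈ C → M v i = rrA ε ∨ M v i = -(rrA ε)) :
    1 - β / d ≤
      ∑ s : Fin (n / d) → Bool,
        (if
            |((d : ℝ) / n) * (∑ i, (if i ∈ C then
                M (fun i' => if i' ∈ C then 0 else rrMsg ε x' s i') i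
              else rrMsg ε x' s i)) -
              ((d : ℝ) / n) * ∑ i, x' i|
              < rrA ε * (Real.sqrt (2 * d / n * Real.log (2 * d / β)) + 2 * d * m' / n)
          then ∏ i, rrProb ε (s i)
          else 0) :=
  stmt_12_general ε β hε hβ n d hd hdn hdvd m' x' hx' C hC M hM
end

section
/- Let d > 2 be an even integer, let α > 0, and let P be a probability distribution on [d] with ‖P − U‖_1 > α·√(10d), where U is the uniform distribution on [d]. If S is a uniformly random subset of [d] of size d/2, then Pr_S[ | 1/2 − P(S) | > α ] > 1/477, where P(S) = Σ_{x∈S} P(x). -/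
/-!
Put `e x = P x - 1/d` and `X S = ∑ x ∈ S, e x`, so that `∑ e = 0` and `1/2 - P(S) = -X S`.
Cauchy–Schwarz turns the `ℓ¹` hypothesis into `∑ e² > 10 α²`. Among the `n`-subsets of a
`2n`-set, exactly `r t = C(2n - t, n)` contain a given `t`-set; expanding `X S ^ 2` and `X S ^ 4`
over tuples therefore gives the moments exactly in terms of `r 1, …, r 4`, `∑ e²` and `∑ e⁴`.
Since `2 r 1 = C(2n, n)` and `2 r (t + 1) ≤ r t`, this yields `𝔼 X² ≥ ∑ e² / 4` and
`𝔼 X⁴ ≤ 5/4 (∑ e²)²`, and the Paley–Zygmund inequality gives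
`Pr[|X| > α] ≥ (3/20)² / (5/4) = 9/500 > 1/477`.
-/

open scoped Classical
open Finset

namespace Nat

theorem two_mul_choose_le_choose_succ {m n : ℕ} (h : m < 2 * n) :
    2 * m.choose n ≤ (m + 1).choose n := by
  rcases lt_or_ge m n with hmn | hnm
  · simp [choose_eq_zero_of_lt hmn]
  · refine Nat.le_of_mul_le_mul_right (c := m + 1 - n) ?_ (by omega)
    calc 2 * m.choose n * (m + 1 - n) = m.choose n * (2 * (m + 1 - n)) := by ring
      _ ≤ m.choose n * (m + 1) := Nat.mul_le_mul_left _ (by omega)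
      _ = (m + 1).choose n * (m + 1 - n) := choose_mul_succ_eq m n

theorem two_mul_choose_sub_succ_le {n : ℕ} (hn : 0 < n) (t : ℕ) :
    2 * (2 * n - (t + 1)).choose n ≤ (2 * n - t).choose n := by
  rcases lt_or_ge t (2 * n) with ht | ht
  · have := two_mul_choose_le_choose_succ (m := 2 * n - (t + 1)) (n := n) (by omega)
    rwa [show 2 * n - (t + 1) + 1 = 2 * n - t by omega] at this
  · simp [show 2 * n - (t + 1) = 0 by omega, choose_eq_zero_of_lt hn]

theorem two_mul_choose_sub_one_eq {n : ℕ} (hn : 0 < n) :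
    2 * (2 * n - 1).choose n = (2 * n).choose n := by
  have key := choose_mul_succ_eq (2 * n - 1) n
  rw [show 2 * n - 1 + 1 = 2 * n by omega, show 2 * n - n = n by omega] at key
  refine Nat.eq_of_mul_eq_mul_right hn ?_
  linarith

end Nat

theorem Fintype.sum_fin_two_pi {β M : Type*} [Fintype β] [AddCommMonoid M]
    (g : (Fin 2 → β) → M) : ∑ p, g p = ∑ x, ∑ y, g ![x, y] := by
  simp only [← (Fin.consEquiv fun _ => β).sum_comp, Fintype.sum_prod_type, Fintype.sum_unique]
  congr!

theorem Fintype.sum_fin_four_pi {β M : Type*} [Fintype β] [AddCommMonoid M]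
    (g : (Fin 4 → β) → M) : ∑ p, g p = ∑ x, ∑ y, ∑ z, ∑ w, g ![x, y, z, w] := by
  simp only [← (Fin.consEquiv fun _ => β).sum_comp, Fintype.sum_prod_type, Fintype.sum_unique]
  congr!

/-- Paley–Zygmund inequality for the counting measure on `F`. -/
theorem sq_sub_le_sum_pow_four_mul_card_filter {ι : Type*} (F : Finset ι) (X : ι → ℝ) (α : ℝ)
    (h : α ^ 2 * #F ≤ ∑ i ∈ F, X i ^ 2) :
    (∑ i ∈ F, X i ^ 2 - α ^ 2 * #F) ^ 2 ≤ (∑ i ∈ F, X i ^ 4) * #{i ∈ F | α < |X i|} := by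
  set G := F.filter fun i => α < |X i|
  have hsmall : ∑ i ∈ F.filter (fun i => ¬α < |X i|), X i ^ 2 ≤ α ^ 2 * #F := by
    calc ∑ i ∈ F.filter (fun i => ¬α < |X i|), X i ^ 2
        ≤ ∑ _i ∈ F.filter (fun i => ¬α < |X i|), α ^ 2 := by
          refine sum_le_sum fun i hi => ?_
          rw [← sq_abs]
          exact pow_le_pow_left₀ (abs_nonneg _) (not_lt.1 (mem_filter.1 hi).2) 2
      _ ≤ α ^ 2 * #F := by
          rw [sum_const, nsmul_eq_mul, mul_comm]
          gcongr
          exact filter_subset _ _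
  have hlarge : ∑ i ∈ F, X i ^ 2 - α ^ 2 * #F ≤ ∑ i ∈ G, X i ^ 2 := by
    rw [← sum_filter_add_sum_filter_not F (fun i => α < |X i|)] at h ⊢
    linarith
  calc (∑ i ∈ F, X i ^ 2 - α ^ 2 * #F) ^ 2
      ≤ (∑ i ∈ G, X i ^ 2) ^ 2 := pow_le_pow_left₀ (by linarith) hlarge 2
    _ ≤ #G * ∑ i ∈ G, (X i ^ 2) ^ 2 := sq_sum_le_card_mul_sum_sq
    _ ≤ #G * ∑ i ∈ F, (X i ^ 2) ^ 2 := by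
        gcongr
        exact filter_subset _ _
    _ = (∑ i ∈ F, X i ^ 4) * #G := by simp only [← pow_mul, mul_comm]

theorem mul_sq_lt_sum_sq_of_mul_sqrt_lt_sum_abs {ι : Type*} [Fintype ι] {f : ι → ℝ} {α c : ℝ}
    (hα : 0 ≤ α) (hc : 0 ≤ c) (h : α * √(c * Fintype.card ι) < ∑ i, |f i|) :
    c * α ^ 2 < ∑ i, f i ^ 2 := by
  have hCS : (∑ i, |f i|) ^ 2 ≤ Fintype.card ι * ∑ i, f i ^ 2 := by
    simpa [sq_abs] using sq_sum_le_card_mul_sum_sq (s := univ) (f := fun i => |f i|)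
  have hsq : (α * √(c * Fintype.card ι)) ^ 2 < (∑ i, |f i|) ^ 2 :=
    pow_lt_pow_left₀ h (by positivity) two_ne_zero
  rw [mul_pow, Real.sq_sqrt (by positivity)] at hsq
  have hpos : 0 < ∑ i, |f i| := (by positivity : 0 ≤ α * √(c * Fintype.card ι)).trans_lt h
  have hcard : (0 : ℝ) < Fintype.card ι := by
    refine (Nat.cast_nonneg _).lt_of_ne fun h0 => ?_
    rw [← h0, zero_mul] at hCS
    nlinarith [pow_pos hpos 2]
  nlinarith

section

variable {β : Type*} [Fintype β] [DecidableEq β]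

theorem card_filter_superset_powersetCard {n : ℕ} (hn : n ≤ Fintype.card β) (T : Finset β) :
    #{S ∈ powersetCard n univ | T ⊆ S} = (Fintype.card β - #T).choose (Fintype.card β - n) := by
  rw [← card_compl, ← card_powersetCard]
  refine card_nbij' compl compl (fun S hS => ?_) (fun A hA => ?_)
    (fun S _ => compl_compl S) (fun A _ => compl_compl A)
  · simp only [coe_filter, mem_powersetCard, subset_univ, true_and] at hS
    simp [hS.1, hS.2, card_compl]
  · simp only [mem_coe, mem_powersetCard] at hA
    simp [card_compl, hA.2, subset_compl_comm.mp hA.1]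
    omega

theorem sum_sum_pow_eq_sum_card_filter (F : Finset (Finset β)) (e : β → ℝ) (k : ℕ) :
    ∑ S ∈ F, (∑ x ∈ S, e x) ^ k
      = ∑ p : Fin k → β, (#{S ∈ F | ∀ i, p i ∈ S} : ℝ) * ∏ i, e (p i) := by
  simp only [sum_pow', ← nsmul_eq_mul, ← sum_const]
  refine sum_comm' fun S p => ?_
  simp [Fintype.mem_piFinset]

local notation "δ" a:max b:max => (if a = b then (1 : ℝ) else 0)

omit [Fintype β] in
theorem apply_card_pair (r : ℕ → ℝ) (x y : β) :
    r #{x, y} = r 2 + (r 1 - r 2) * δ x y := by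
  by_cases hxy : x = y <;> simp [hxy]

omit [Fintype β] in
/-- Each `δ`-monomial is the indicator that the equality pattern of `(x, y, z, w)` is at least as
coarse as a partition `σ` of the four positions; its coefficient is the Möbius inversion of `r`
at `σ`. -/
theorem apply_card_quad (r : ℕ → ℝ) (x y z w : β) :
    r #{x, y, z, w} = r 4 + (r 3 - r 4) * (δ x y + δ x z + δ x w + δ y z + δ y w + δ z w)
      + (r 2 - 2 * r 3 + r 4) * (δ x y * δ z w + δ x z * δ y w + δ x w * δ y z)
      + (r 2 - 3 * r 3 + 2 * r 4) * (δ x y * δ x z + δ x y * δ x w + δ x z * δ x w + δ y z * δ y w)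
      + (r 1 - 7 * r 2 + 12 * r 3 - 6 * r 4) * (δ x y * δ x z * δ x w) := by
  by_cases hxy : x = y <;> by_cases hxz : x = z <;> by_cases hxw : x = w <;>
    by_cases hyz : y = z <;> by_cases hyw : y = w <;> by_cases hzw : z = w <;>
    simp_all [card_insert_of_notMem] <;> ring

variable {e : β → ℝ}

theorem sum_apply_card_pair_mul (he : ∑ x, e x = 0) (r : ℕ → ℝ) :
    ∑ x, ∑ y, r #{x, y} * (e x * e y) = (r 1 - r 2) * ∑ x, e x ^ 2 := by
  simp only [apply_card_pair, add_mul, mul_assoc, sum_add_distrib, ← mul_sum, ite_mul, one_mul,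
    zero_mul, sum_ite_eq, mem_univ, if_true, he, mul_zero, zero_add, sq]

theorem sum_apply_card_quad_mul (he : ∑ x, e x = 0) (r : ℕ → ℝ) :
    ∑ x, ∑ y, ∑ z, ∑ w, r #{x, y, z, w} * (e x * e y * e z * e w) =
      3 * (r 2 - 2 * r 3 + r 4) * (∑ x, e x ^ 2) ^ 2
        + (r 1 - 7 * r 2 + 12 * r 3 - 6 * r 4) * ∑ x, e x ^ 4 := by
  -- after contracting the `δ`s, a monomial in which some index carries a single `e` vanishes by `he`
  simp only [apply_card_quad, add_mul, mul_assoc, sum_add_distrib, ← mul_sum, ite_mul, one_mul,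
    zero_mul, sum_ite_irrel, sum_ite_eq, mem_univ, if_true, ← sum_mul, he, mul_zero, zero_add,
    sum_const_zero, ite_self, add_zero]
  simp only [mul_comm (e _) (e _), mul_left_comm (e _) (e _) (e _), ← mul_sum]
  simp only [← mul_assoc, ← sum_mul, ← sq, ← pow_mul]
  ring_nf

section UniformSupersetCount

variable (F : Finset (Finset β)) (r : ℕ → ℝ)
  (hr : ∀ T : Finset β, (#{S ∈ F | T ⊆ S} : ℝ) = r #T)
include hr

theorem sum_sum_sq_eq_of_card_filter_superset (he : ∑ x, e x = 0) :
    ∑ S ∈ F, (∑ x ∈ S, e x) ^ 2 = (r 1 - r 2) * ∑ x, e x ^ 2 := by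
  rw [sum_sum_pow_eq_sum_card_filter, Fintype.sum_fin_two_pi, ← sum_apply_card_pair_mul he]
  refine sum_congr rfl fun x _ => sum_congr rfl fun y _ => ?_
  rw [← hr, Fin.prod_univ_two]
  congr 3
  exact filter_congr fun S _ => by simp [Fin.forall_fin_two, insert_subset_iff]

theorem sum_sum_pow_four_eq_of_card_filter_superset (he : ∑ x, e x = 0) :
    ∑ S ∈ F, (∑ x ∈ S, e x) ^ 4 =
      3 * (r 2 - 2 * r 3 + r 4) * (∑ x, e x ^ 2) ^ 2
        + (r 1 - 7 * r 2 + 12 * r 3 - 6 * r 4) * ∑ x, e x ^ 4 := by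
  rw [sum_sum_pow_eq_sum_card_filter, Fintype.sum_fin_four_pi, ← sum_apply_card_quad_mul he]
  refine sum_congr rfl fun x _ => sum_congr rfl fun y _ =>
    sum_congr rfl fun z _ => sum_congr rfl fun w _ => ?_
  rw [← hr, Fin.prod_univ_four]
  congr 3
  exact filter_congr fun S _ => by simp [Fin.forall_fin_succ, insert_subset_iff]

end UniformSupersetCount

section HalfSlice

variable {n : ℕ} (hcard : Fintype.card β = 2 * n)
include hcard

theorem card_filter_superset_powersetCard_half (T : Finset β) :
    (#{S ∈ powersetCard n univ | T ⊆ S} : ℝ) = ((2 * n - #T).choose n : ℕ) := by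
  rw [card_filter_superset_powersetCard (by omega), hcard, show 2 * n - n = n by omega]

omit [DecidableEq β] in
theorem card_powersetCard_half (hn : 0 < n) :
    (#(powersetCard n (univ : Finset β)) : ℝ) = 2 * ((2 * n - 1).choose n : ℕ) := by
  rw [card_powersetCard, card_univ, hcard, ← Nat.two_mul_choose_sub_one_eq hn]
  push_cast
  ring

variable (hn : 0 < n) (he : ∑ x, e x = 0)
include hn he

theorem sum_powersetCard_half_sum_sq_ge :
    (#(powersetCard n (univ : Finset β)) : ℝ) / 4 * ∑ x, e x ^ 2
      ≤ ∑ S ∈ powersetCard n univ, (∑ x ∈ S, e x) ^ 2 := by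
  rw [sum_sum_sq_eq_of_card_filter_superset _ (fun t => ((2 * n - t).choose n : ℕ))
    (card_filter_superset_powersetCard_half hcard) he, card_powersetCard_half hcard hn]
  have h12 : 2 * ((2 * n - 2).choose n : ℝ) ≤ (2 * n - 1).choose n := by
    exact_mod_cast Nat.two_mul_choose_sub_succ_le hn 1
  have hm2 : 0 ≤ ∑ x, e x ^ 2 := sum_nonneg fun x _ => sq_nonneg _
  nlinarith

theorem sum_powersetCard_half_sum_pow_four_le :
    ∑ S ∈ powersetCard n univ, (∑ x ∈ S, e x) ^ 4
      ≤ 5 / 4 * #(powersetCard n (univ : Finset β)) * (∑ x, e x ^ 2) ^ 2 := by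
  set r : ℕ → ℝ := fun t => ((2 * n - t).choose n : ℕ)
  rw [sum_sum_pow_four_eq_of_card_filter_superset _ r
    (card_filter_superset_powersetCard_half hcard) he, card_powersetCard_half hcard hn]
  have hstep (t : ℕ) : 2 * r (t + 1) ≤ r t := by
    simp only [r]
    exact_mod_cast Nat.two_mul_choose_sub_succ_le hn t
  have hr0 (t : ℕ) : 0 ≤ r t := Nat.cast_nonneg _
  have hm4 : 0 ≤ ∑ x, e x ^ 4 := sum_nonneg fun x _ => by positivity
  have hm4_le : ∑ x, e x ^ 4 ≤ (∑ x, e x ^ 2) ^ 2 := by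
    simpa only [← pow_mul] using sum_sq_le_sq_sum_of_nonneg fun x _ => sq_nonneg (e x)
  have hc : r 1 - 7 * r 2 + 12 * r 3 - 6 * r 4 ≤ r 1 := by linarith [hstep 2, hr0 2, hr0 4]
  nlinarith [hstep 1, hstep 3, hr0 3, sq_nonneg (∑ x, e x ^ 2), mul_nonneg (sub_nonneg.2 hc) hm4,
    mul_nonneg (hr0 1) (sub_nonneg.2 hm4_le)]

theorem le_card_filter_lt_abs_sum_powersetCard_half {α : ℝ}
    (hα : 10 * α ^ 2 < ∑ x, e x ^ 2) :
    9 / 500 * #(powersetCard n (univ : Finset β))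
      ≤ (#{S ∈ powersetCard n univ | α < |∑ x ∈ S, e x|} : ℝ) := by
  set F := powersetCard n (univ : Finset β)
  set m2 := ∑ x, e x ^ 2
  set K : ℝ := ((#{S ∈ F | α < |∑ x ∈ S, e x|} : ℕ) : ℝ)
  have hN : (0 : ℝ) < #F := by exact_mod_cast card_pos.2 (powersetCard_nonempty.2 (by rw [card_univ]; omega))
  have h2 := sum_powersetCard_half_sum_sq_ge hcard hn he
  have h4 := sum_powersetCard_half_sum_pow_four_le hcard hn he
  have hm2 : 0 < m2 := by nlinarith
  have hgap : 3 / 20 * #F * m2 ≤ ∑ S ∈ F, (∑ x ∈ S, e x) ^ 2 - α ^ 2 * #F := by nlinarith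
  have hpz := sq_sub_le_sum_pow_four_mul_card_filter F (fun S => ∑ x ∈ S, e x) α (by nlinarith)
  have hK : 9 / 500 * #F * (5 / 4 * #F * m2 ^ 2) ≤ K * (5 / 4 * #F * m2 ^ 2) := by
    calc 9 / 500 * #F * (5 / 4 * #F * m2 ^ 2) = (3 / 20 * #F * m2) ^ 2 := by ring
      _ ≤ (∑ S ∈ F, (∑ x ∈ S, e x) ^ 2 - α ^ 2 * #F) ^ 2 := by gcongr
      _ ≤ (∑ S ∈ F, (∑ x ∈ S, e x) ^ 4) * K := hpz
      _ ≤ 5 / 4 * #F * m2 ^ 2 * K := by gcongr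
      _ = K * (5 / 4 * #F * m2 ^ 2) := by ring
  exact le_of_mul_le_mul_right hK (by positivity)

end HalfSlice

end

theorem stmt_19_general (d : ℕ) (hd : Even d) (α : ℝ) (hα : 0 < α)
    (P : Fin d → ℝ) (hP1 : ∑ x, P x = 1)
    (hfar : α * Real.sqrt (10 * d) < ∑ x, |P x - 1 / (d : ℝ)|) :
    1 / 477 <
      (((Finset.powersetCard (d / 2) (Finset.univ : Finset (Fin d))).filter
          (fun S => α < |1 / 2 - ∑ x ∈ S, P x|)).card : ℝ)
        / ((Finset.powersetCard (d / 2) (Finset.univ : Finset (Fin d))).card : ℝ) := by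
  obtain ⟨n, rfl⟩ := hd
  have hn : 0 < n := Nat.pos_of_ne_zero fun h => by subst h; simp at hP1
  have hcard : Fintype.card (Fin (n + n)) = 2 * n := by rw [Fintype.card_fin, two_mul]
  have hdR : ((n + n : ℕ) : ℝ) = 2 * n := by push_cast; ring
  set e : Fin (n + n) → ℝ := fun x => P x - 1 / ((n + n : ℕ) : ℝ)
  have he : ∑ x, e x = 0 := by
    simp only [e, sum_sub_distrib, hP1, sum_const, card_univ, hcard, nsmul_eq_mul, hdR]
    push_cast
    field_simp
    ring
  have hshift (S : Finset (Fin (n + n))) (hS : S ∈ powersetCard n univ) :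
      1 / 2 - ∑ x ∈ S, P x = -∑ x ∈ S, e x := by
    simp only [e, sum_sub_distrib, sum_const, (mem_powersetCard.1 hS).2, nsmul_eq_mul, hdR]
    field_simp
    ring
  have hm2 : 10 * α ^ 2 < ∑ x, e x ^ 2 :=
    mul_sq_lt_sum_sq_of_mul_sqrt_lt_sum_abs hα.le (by norm_num) (by simpa [e] using hfar)
  have hN : (0 : ℝ) < #(powersetCard n (univ : Finset (Fin (n + n)))) := by
    exact_mod_cast card_pos.2 (powersetCard_nonempty.2 (by simp))
  rw [show (n + n) / 2 = n by omega, filter_congr fun S hS => by rw [hshift S hS, abs_neg],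
    lt_div_iff₀ hN]
  linarith [le_card_filter_lt_abs_sum_powersetCard_half hcard hn he hm2]

/-- let `d > 2` be even, `α > 0`, and `P` a probability
distribution on `[d]` with `‖P - U‖₁ = Σ_x |P(x) - 1/d| > α √(10 d)`. If `S` is
a uniformly random subset of `[d]` of size `d/2`, then
`Pr_S[|1/2 - P(S)| > α] > 1/477`. -/
theorem stmt_19 (d : ℕ) (hd2 : 2 < d) (hd : Even d) (α : ℝ) (hα : 0 < α)
    (P : Fin d → ℝ) (hP0 : ∀ x, 0 ≤ P x) (hP1 : ∑ x, P x = 1)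
    (hfar : α * Real.sqrt (10 * d) < ∑ x, |P x - 1 / (d : ℝ)|) :
    1 / 477 <
      (((Finset.powersetCard (d / 2) (Finset.univ : Finset (Fin d))).filter
          (fun S => α < |1 / 2 - ∑ x ∈ S, P x|)).card : ℝ)
        / ((Finset.powersetCard (d / 2) (Finset.univ : Finset (Fin d))).card : ℝ) :=
  stmt_19_general d hd α hα P hP1 hfar
end
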